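/- Under the stochastic optimal control setup with weight function w, let 𝔓(P̂,r̂) and 𝔓(P̃,r̃) be nonempty box ambiguity sets with robust Bellman fixed points V̂* and Ṽ*, and for a fixed s̄ ∈ S let Â*(s̄) := argmin_{a∈A} sup_{Q∈𝔓(P̂,r̂)} E_Q[C(s̄,a,ξ) + γ V̂*(g(s̄,a,ξ))] and Ã*(s̄) := argmin_{a∈A} sup_{Q∈𝔓(P̃,r̃)} E_Q[C(s̄,a,ξ) + γ Ṽ*(g(s̄,a,ξ))]. Then for every ε > 0 there exists δ > 0 (depending on ε and s̄) such that H(𝔓(P̂,r̂), 𝔓(P̃,r̃); d_TV) < δ implies D(Ã*(s̄), Â*(s̄); d_E) < ε. -/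
import Mathlib


open Filter Topology

noncomputable section

/-- Box-type ambiguity set `𝔓(P,r) = {Q ∈ Δ_J : P_j - r_j ≤ Q_j ≤ P_j + r_j ∀ j}`. -/
def boxSet (J : ℕ) (P r : Fin J → ℝ) : Set (Fin J → ℝ) :=
  {Q | Q ∈ stdSimplex ℝ (Fin J) ∧ ∀ j, P j - r j ≤ Q j ∧ Q j ≤ P j + r j}

/-- Expectation of `h` under the probability vector `Q`. -/
def expec {J : ℕ} (Q h : Fin J → ℝ) : ℝ := ∑ j, Q j * h j

/-- Weighted sup norm `‖V‖_w = sup_{s ∈ S} |V s| / w s`. -/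
noncomputable def wSupNorm {m : ℕ} (S : Set (Fin m → ℝ)) (w V : (Fin m → ℝ) → ℝ) : ℝ :=
  ⨆ s : S, |V (s : Fin m → ℝ)| / w (s : Fin m → ℝ)

/-- Distributionally robust Bellman operator. -/
noncomputable def robustBellman {J m n : ℕ} (A : Set (Fin n → ℝ)) (amb : Set (Fin J → ℝ))
    (C : (Fin m → ℝ) → (Fin n → ℝ) → Fin J → ℝ)
    (g : (Fin m → ℝ) → (Fin n → ℝ) → Fin J → Fin m → ℝ)
    (γ : ℝ) (V : (Fin m → ℝ) → ℝ) (s : Fin m → ℝ) : ℝ :=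
  ⨅ a : A, ⨆ Q : amb,
    expec (Q : Fin J → ℝ) (fun j => C s (a : Fin n → ℝ) j + γ * V (g s (a : Fin n → ℝ) j))

/-- True Bellman operator under the distribution `Pc`. -/
noncomputable def trueBellman {J m n : ℕ} (A : Set (Fin n → ℝ)) (Pc : Fin J → ℝ)
    (C : (Fin m → ℝ) → (Fin n → ℝ) → Fin J → ℝ)
    (g : (Fin m → ℝ) → (Fin n → ℝ) → Fin J → Fin m → ℝ)
    (γ : ℝ) (V : (Fin m → ℝ) → ℝ) (s : Fin m → ℝ) : ℝ :=
  ⨅ a : A, expec Pc (fun j => C s (a : Fin n → ℝ) j + γ * V (g s (a : Fin n → ℝ) j))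

/-- Policy-evaluation Bellman operator under the distribution `Pc`. -/
noncomputable def policyBellman {J m n : ℕ} (Pc : Fin J → ℝ)
    (C : (Fin m → ℝ) → (Fin n → ℝ) → Fin J → ℝ)
    (g : (Fin m → ℝ) → (Fin n → ℝ) → Fin J → Fin m → ℝ)
    (π : (Fin m → ℝ) → (Fin n → ℝ))
    (γ : ℝ) (V : (Fin m → ℝ) → ℝ) (s : Fin m → ℝ) : ℝ :=
  expec Pc (fun j => C s (π s) j + γ * V (g s (π s) j))

/-- Pseudometric with ζ-structure: `d_G(P,Q) = sup_{g ∈ G} |E_P[g] - E_Q[g]|`. -/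
noncomputable def dzeta {J : ℕ} (G : Set (Fin J → ℝ)) (P Q : Fin J → ℝ) : ℝ :=
  ⨆ g : G, |expec P (g : Fin J → ℝ) - expec Q (g : Fin J → ℝ)|

/-- Total variation distance on probability vectors. -/
noncomputable def dTV {J : ℕ} (P Q : Fin J → ℝ) : ℝ := ∑ j, |P j - Q j|

/-- Excess (deviation) of `A` over `B` with respect to a (pseudo)metric `d`. -/
noncomputable def excessD {α : Type*} (d : α → α → ℝ) (A B : Set α) : ℝ :=
  ⨆ x : A, ⨅ y : B, d (x : α) (y : α)

/-- Hausdorff distance with respect to a (pseudo)metric `d`. -/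
noncomputable def hausD {α : Type*} (d : α → α → ℝ) (A B : Set α) : ℝ :=
  max (excessD d A B) (excessD d B A)

/-- Euclidean distance on `ℝ^d`. -/
noncomputable def eDist {d : ℕ} (x y : Fin d → ℝ) : ℝ :=
  Real.sqrt (∑ i, (x i - y i) ^ 2)


noncomputable def sE {J : ℕ} (B : Set (Fin J → ℝ)) (x : Fin J → ℝ) : ℝ :=
  ⨆ Q : B, expec (Q : Fin J → ℝ) x

variable {J : ℕ}

lemma abs_expec_le {Q x : Fin J → ℝ} {Mx : ℝ} (hQ : Q ∈ stdSimplex ℝ (Fin J))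
    (hx : ∀ j, |x j| ≤ Mx) : |expec Q x| ≤ Mx := by
  have h1 : |expec Q x| ≤ ∑ j, Q j * |x j| := by
    refine (Finset.abs_sum_le_sum_abs _ _).trans ?_
    refine Finset.sum_le_sum fun j _ => ?_
    rw [abs_mul, abs_of_nonneg (hQ.1 j)]
  have h2 : ∑ j, Q j * |x j| ≤ ∑ j, Q j * Mx :=
    Finset.sum_le_sum fun j _ => mul_le_mul_of_nonneg_left (hx j) (hQ.1 j)
  have h3 : ∑ j, Q j * Mx = Mx := by
    rw [← Finset.sum_mul, hQ.2, one_mul]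
  linarith

lemma expec_sub_le {Q x y : Fin J → ℝ} {c : ℝ} (hQ : Q ∈ stdSimplex ℝ (Fin J))
    (h : ∀ j, |x j - y j| ≤ c) : |expec Q x - expec Q y| ≤ c := by
  have : expec Q x - expec Q y = expec Q (fun j => x j - y j) := by
    simp [expec, ← Finset.sum_sub_distrib, mul_sub]
  rw [this]
  exact abs_expec_le hQ h

lemma expec_dTV_le {P Q x : Fin J → ℝ} {Mx : ℝ} (hx : ∀ j, |x j| ≤ Mx) :
    |expec P x - expec Q x| ≤ dTV P Q * Mx := by
  have : expec P x - expec Q x = ∑ j, (P j - Q j) * x j := by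
    simp [expec, ← Finset.sum_sub_distrib, sub_mul]
  rw [this, dTV, Finset.sum_mul]
  refine (Finset.abs_sum_le_sum_abs _ _).trans (Finset.sum_le_sum fun j _ => ?_)
  rw [abs_mul]
  exact mul_le_mul_of_nonneg_left (hx j) (abs_nonneg _)

lemma bddAbove_expec {B : Set (Fin J → ℝ)} (hBs : B ⊆ stdSimplex ℝ (Fin J)) (x : Fin J → ℝ) :
    BddAbove (Set.range fun Q : B => expec (Q : Fin J → ℝ) x) := by
  refine ⟨∑ j, |x j|, ?_⟩
  rintro v ⟨Q, rfl⟩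
  calc expec (Q : Fin J → ℝ) x ≤ |expec (Q : Fin J → ℝ) x| := le_abs_self _
    _ ≤ ∑ j, |x j| := by
        refine (Finset.abs_sum_le_sum_abs _ _).trans (Finset.sum_le_sum fun j _ => ?_)
        rw [abs_mul]
        have h0 := (hBs Q.2).1 j
        have h1 : (Q : Fin J → ℝ) j ≤ 1 := by
          have := (hBs Q.2).2
          calc (Q : Fin J → ℝ) j ≤ ∑ i, (Q : Fin J → ℝ) i :=
            Finset.single_le_sum (fun i _ => (hBs Q.2).1 i) (Finset.mem_univ j)
          _ = 1 := this
        calc |(Q : Fin J → ℝ) j| * |x j| = (Q : Fin J → ℝ) j * |x j| := by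
              rw [abs_of_nonneg h0]
          _ ≤ 1 * |x j| := mul_le_mul_of_nonneg_right h1 (abs_nonneg _)
          _ = |x j| := one_mul _

lemma abs_sE_le {B : Set (Fin J → ℝ)} (hB : B.Nonempty) (hBs : B ⊆ stdSimplex ℝ (Fin J))
    {x : Fin J → ℝ} {Mx : ℝ} (hx : ∀ j, |x j| ≤ Mx) : |sE B x| ≤ Mx := by
  haveI : Nonempty B := hB.to_subtype
  rw [abs_le]
  constructor
  · obtain ⟨Q⟩ := ‹Nonempty B›
    calc -Mx ≤ expec (Q : Fin J → ℝ) x := neg_le_of_abs_le (abs_expec_le (hBs Q.2) hx)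
      _ ≤ sE B x := le_ciSup (bddAbove_expec hBs x) Q
  · exact ciSup_le fun Q => (abs_le.1 (abs_expec_le (hBs Q.2) hx)).2

lemma abs_sE_sub_le {B : Set (Fin J → ℝ)} (hB : B.Nonempty) (hBs : B ⊆ stdSimplex ℝ (Fin J))
    {x y : Fin J → ℝ} {c : ℝ} (h : ∀ j, |x j - y j| ≤ c) : |sE B x - sE B y| ≤ c := by
  haveI : Nonempty B := hB.to_subtype
  have key : ∀ u v : Fin J → ℝ, (∀ j, |u j - v j| ≤ c) → sE B u ≤ sE B v + c := by
    intro u v huv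
    refine ciSup_le fun Q => ?_
    have h1 := (abs_sub_le_iff.1 (expec_sub_le (hBs Q.2) huv)).1
    have h2 : expec (Q : Fin J → ℝ) v ≤ sE B v := le_ciSup (bddAbove_expec hBs v) Q
    linarith
  have h1 := key x y h
  have h2 := key y x (fun j => by rw [abs_sub_comm]; exact h j)
  rw [abs_sub_le_iff]
  constructor <;> linarith

lemma sE_le_sE_add {B1 B2 : Set (Fin J → ℝ)} (hB1 : B1.Nonempty) (hB2 : B2.Nonempty)
    (hB1s : B1 ⊆ stdSimplex ℝ (Fin J)) (hB2s : B2 ⊆ stdSimplex ℝ (Fin J))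
    {x : Fin J → ℝ} {Mx δ : ℝ} (hx : ∀ j, |x j| ≤ Mx) (hMx : 0 ≤ Mx)
    (hE : ∀ Q ∈ B1, ∃ Q' ∈ B2, dTV Q Q' ≤ δ) (hδ : 0 ≤ δ) :
    sE B1 x ≤ sE B2 x + δ * Mx := by
  haveI : Nonempty B1 := hB1.to_subtype
  haveI : Nonempty B2 := hB2.to_subtype
  refine ciSup_le fun Q => ?_
  obtain ⟨Q', hQ'B, hd⟩ := hE Q Q.2
  have h1 : |expec (Q : Fin J → ℝ) x - expec Q' x| ≤ dTV (Q : Fin J → ℝ) Q' * Mx :=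
    expec_dTV_le hx
  have h2 : expec Q' x ≤ sE B2 x := le_ciSup (bddAbove_expec hB2s x) ⟨Q', hQ'B⟩
  have h3 : dTV (Q : Fin J → ℝ) Q' * Mx ≤ δ * Mx := mul_le_mul_of_nonneg_right hd hMx
  have := (abs_sub_le_iff.1 h1).1
  linarith

lemma ciInf_le_ciInf_add {ι : Type*} [Nonempty ι] {f g : ι → ℝ} {c : ℝ}
    (hf : BddBelow (Set.range f)) (h : ∀ i, f i ≤ g i + c) : iInf f ≤ iInf g + c := by
  rw [← sub_le_iff_le_add]
  refine le_ciInf fun i => ?_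
  have := ciInf_le hf i
  have := h i
  linarith

lemma abs_ciInf_le {ι : Type*} [Nonempty ι] {f : ι → ℝ} {c : ℝ} (h : ∀ i, |f i| ≤ c) :
    |⨅ i, f i| ≤ c := by
  have hbb : BddBelow (Set.range f) := ⟨-c, by rintro v ⟨i, rfl⟩; linarith [(abs_le.1 (h i)).1]⟩
  rw [abs_le]
  constructor
  · exact le_ciInf fun i => (abs_le.1 (h i)).1
  · obtain ⟨i⟩ := ‹Nonempty ι›
    exact (ciInf_le hbb i).trans (abs_le.1 (h i)).2

lemma abs_ciInf_sub_le {ι : Type*} [Nonempty ι] {f f' : ι → ℝ} {c : ℝ}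
    (hf : BddBelow (Set.range f)) (hf' : BddBelow (Set.range f'))
    (h : ∀ i, |f i - f' i| ≤ c) : |(⨅ i, f i) - ⨅ i, f' i| ≤ c := by
  rw [abs_sub_le_iff]
  constructor
  · have h1 : iInf f ≤ iInf f' + c :=
      ciInf_le_ciInf_add (g := f') hf fun i => by linarith [(abs_sub_le_iff.1 (h i)).1]
    linarith
  · have h2 : iInf f' ≤ iInf f + c :=
      ciInf_le_ciInf_add (g := f) hf' fun i => by linarith [(abs_sub_le_iff.1 (h i)).2]
    linarith

/-- Bellman operator abbreviation. -/
noncomputable def bel {J m n : ℕ} (A : Set (Fin n → ℝ))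
    (C : (Fin m → ℝ) → (Fin n → ℝ) → Fin J → ℝ)
    (g : (Fin m → ℝ) → (Fin n → ℝ) → Fin J → Fin m → ℝ) (γ : ℝ)
    (B : Set (Fin J → ℝ)) (V : (Fin m → ℝ) → ℝ) (s : Fin m → ℝ) : ℝ :=
  ⨅ a : A, sE B (fun j => C s (a : Fin n → ℝ) j + γ * V (g s (a : Fin n → ℝ) j))

section Bellman

variable {J m n : ℕ} {S : Set (Fin m → ℝ)} {A : Set (Fin n → ℝ)}
  {C : (Fin m → ℝ) → (Fin n → ℝ) → Fin J → ℝ}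
  {g : (Fin m → ℝ) → (Fin n → ℝ) → Fin J → Fin m → ℝ}
  {γ κ Cbar : ℝ} {w : (Fin m → ℝ) → ℝ}

variable (hA : A.Nonempty) (hγ0 : 0 ≤ γ) (hκ0 : 0 ≤ κ) (hCbar0 : 0 < Cbar)
  (hw1 : ∀ s ∈ S, 1 ≤ w s)
  (hCb : ∀ s ∈ S, ∀ a ∈ A, ∀ j, |C s a j| ≤ Cbar * w s)
  (hdrift : ∀ s ∈ S, ∀ a ∈ A, ∀ j, w (g s a j) ≤ κ * w s)
  (hgS : ∀ s ∈ S, ∀ a ∈ A, ∀ j, g s a j ∈ S)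
  (hγκ : γ * κ < 1)

include hA hγ0 hκ0 hw1 hCb hdrift hgS in
/-- pointwise bound for the Bellman image. -/
lemma bel_abs_bound {B : Set (Fin J → ℝ)} (hB : B.Nonempty) (hBs : B ⊆ stdSimplex ℝ (Fin J))
    {V : (Fin m → ℝ) → ℝ} {c : ℝ} (hc : 0 ≤ c) (hV : ∀ s ∈ S, |V s| ≤ c * w s) :
    ∀ s ∈ S, |bel A C g γ B V s| ≤ (Cbar + γ * c * κ) * w s := by
  intro s hs
  unfold bel
  haveI : Nonempty A := hA.to_subtype
  refine abs_ciInf_le fun a => ?_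
  refine abs_sE_le hB hBs fun j => ?_
  have h1 := hCb s hs a a.2 j
  have h2 : |V (g s (a : Fin n → ℝ) j)| ≤ c * w (g s (a : Fin n → ℝ) j) :=
    hV _ (hgS s hs a a.2 j)
  have h3 := hdrift s hs a a.2 j
  have h4 : |γ * V (g s (a : Fin n → ℝ) j)| = γ * |V (g s (a : Fin n → ℝ) j)| := by
    rw [abs_mul, abs_of_nonneg hγ0]
  have h5 : c * w (g s (a : Fin n → ℝ) j) ≤ c * (κ * w s) :=
    mul_le_mul_of_nonneg_left h3 hc
  calc |C s (a : Fin n → ℝ) j + γ * V (g s (a : Fin n → ℝ) j)|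
      ≤ |C s (a : Fin n → ℝ) j| + |γ * V (g s (a : Fin n → ℝ) j)| := abs_add_le _ _
    _ ≤ Cbar * w s + γ * (c * (κ * w s)) := by
        rw [h4]; have := mul_le_mul_of_nonneg_left (h2.trans h5) hγ0; linarith
    _ = (Cbar + γ * c * κ) * w s := by ring

include hA hγ0 hκ0 hw1 hCb hdrift hgS in
/-- contraction estimate for the Bellman operator. -/
lemma bel_contract {B : Set (Fin J → ℝ)} (hB : B.Nonempty) (hBs : B ⊆ stdSimplex ℝ (Fin J))
    {V V' : (Fin m → ℝ) → ℝ} {c M : ℝ} (hc : 0 ≤ c) (hM : 0 ≤ M)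
    (hVb : ∀ s ∈ S, |V s| ≤ M * w s)
    (hV : ∀ s ∈ S, |V s - V' s| ≤ c * w s) :
    ∀ s ∈ S, |bel A C g γ B V s - bel A C g γ B V' s| ≤ γ * κ * c * w s := by
  intro s hs
  unfold bel
  haveI : Nonempty A := hA.to_subtype
  have hV'b : ∀ t ∈ S, |V' t| ≤ (M + c) * w t := by
    intro t ht
    have h6 : |V' t| ≤ |V' t - V t| + |V t| := by
      calc |V' t| = |V' t - V t + V t| := by congr 1; ring
        _ ≤ |V' t - V t| + |V t| := abs_add_le _ _
    rw [abs_sub_comm] at h6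
    have := hVb t ht; have := hV t ht
    have hwt : 0 ≤ w t := le_trans zero_le_one (hw1 t ht)
    nlinarith
  have bddf : ∀ (W : (Fin m → ℝ) → ℝ) (d : ℝ), (∀ t ∈ S, |W t| ≤ d * w t) → (0 ≤ d) →
      BddBelow (Set.range fun a : A =>
        sE B (fun j => C s (a : Fin n → ℝ) j + γ * W (g s (a : Fin n → ℝ) j))) := by
    intro W d hW hd
    refine ⟨-((Cbar + γ * d * κ) * w s), ?_⟩
    rintro v ⟨a, rfl⟩
    have : |sE B (fun j => C s (a : Fin n → ℝ) j + γ * W (g s (a : Fin n → ℝ) j))| ≤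
        (Cbar + γ * d * κ) * w s := by
      refine abs_sE_le hB hBs fun j => ?_
      have h1 := hCb s hs a a.2 j
      have h2 : |W (g s (a : Fin n → ℝ) j)| ≤ d * w (g s (a : Fin n → ℝ) j) :=
        hW _ (hgS s hs a a.2 j)
      have h3 := hdrift s hs a a.2 j
      have h5 : d * w (g s (a : Fin n → ℝ) j) ≤ d * (κ * w s) :=
        mul_le_mul_of_nonneg_left h3 hd
      calc |C s (a : Fin n → ℝ) j + γ * W (g s (a : Fin n → ℝ) j)|
          ≤ |C s (a : Fin n → ℝ) j| + |γ * W (g s (a : Fin n → ℝ) j)| := abs_add_le _ _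
        _ ≤ Cbar * w s + γ * (d * (κ * w s)) := by
            rw [abs_mul, abs_of_nonneg hγ0]
            have := mul_le_mul_of_nonneg_left (h2.trans h5) hγ0; linarith
        _ = (Cbar + γ * d * κ) * w s := by ring
    linarith [(abs_le.1 this).1]
  refine abs_ciInf_sub_le (bddf V M hVb hM) (bddf V' (M + c) hV'b (by linarith)) fun a => ?_
  refine abs_sE_sub_le hB hBs fun j => ?_
  have h2 : |V (g s (a : Fin n → ℝ) j) - V' (g s (a : Fin n → ℝ) j)| ≤
      c * w (g s (a : Fin n → ℝ) j) := hV _ (hgS s hs a a.2 j)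
  have h3 := hdrift s hs a a.2 j
  have h5 : c * w (g s (a : Fin n → ℝ) j) ≤ c * (κ * w s) :=
    mul_le_mul_of_nonneg_left h3 hc
  have heq : C s (a : Fin n → ℝ) j + γ * V (g s (a : Fin n → ℝ) j) -
      (C s (a : Fin n → ℝ) j + γ * V' (g s (a : Fin n → ℝ) j)) =
      γ * (V (g s (a : Fin n → ℝ) j) - V' (g s (a : Fin n → ℝ) j)) := by ring
  rw [heq, abs_mul, abs_of_nonneg hγ0]
  have := mul_le_mul_of_nonneg_left (h2.trans h5) hγ0
  linarith

end Bellman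

section Bellman2

variable {J m n : ℕ} {S : Set (Fin m → ℝ)} {A : Set (Fin n → ℝ)}
  {C : (Fin m → ℝ) → (Fin n → ℝ) → Fin J → ℝ}
  {g : (Fin m → ℝ) → (Fin n → ℝ) → Fin J → Fin m → ℝ}
  {γ κ Cbar : ℝ} {w : (Fin m → ℝ) → ℝ}

variable (hS : S.Nonempty) (hA : A.Nonempty) (hγ0 : 0 ≤ γ) (hκ0 : 0 ≤ κ) (hCbar0 : 0 < Cbar)
  (hw1 : ∀ s ∈ S, 1 ≤ w s)
  (hCb : ∀ s ∈ S, ∀ a ∈ A, ∀ j, |C s a j| ≤ Cbar * w s)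
  (hdrift : ∀ s ∈ S, ∀ a ∈ A, ∀ j, w (g s a j) ≤ κ * w s)
  (hgS : ∀ s ∈ S, ∀ a ∈ A, ∀ j, g s a j ∈ S)
  (hγκ : γ * κ < 1)

include hA hγ0 hκ0 hCbar0 hw1 hCb hdrift hgS in
/-- Changing the ambiguity set changes the Bellman image by at most `δ * Mx`. -/
lemma bel_set_change {B1 B2 : Set (Fin J → ℝ)} (hB1 : B1.Nonempty) (hB2 : B2.Nonempty)
    (hB1s : B1 ⊆ stdSimplex ℝ (Fin J)) (hB2s : B2 ⊆ stdSimplex ℝ (Fin J))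
    {V : (Fin m → ℝ) → ℝ} {c δ : ℝ} (hc : 0 ≤ c) (hδ : 0 ≤ δ)
    (hV : ∀ s ∈ S, |V s| ≤ c * w s)
    (hE12 : ∀ Q ∈ B1, ∃ Q' ∈ B2, dTV Q Q' ≤ δ)
    (hE21 : ∀ Q ∈ B2, ∃ Q' ∈ B1, dTV Q Q' ≤ δ) :
    ∀ s ∈ S, |bel A C g γ B1 V s - bel A C g γ B2 V s| ≤ δ * ((Cbar + γ * c * κ) * w s) := by
  intro s hs
  haveI : Nonempty A := hA.to_subtype
  have hws : (0:ℝ) ≤ w s := le_trans zero_le_one (hw1 s hs)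
  have hxb : ∀ a : A, ∀ j, |C s (a : Fin n → ℝ) j + γ * V (g s (a : Fin n → ℝ) j)| ≤
      (Cbar + γ * c * κ) * w s := by
    intro a j
    have h1 := hCb s hs a a.2 j
    have h2 : |V (g s (a : Fin n → ℝ) j)| ≤ c * w (g s (a : Fin n → ℝ) j) :=
      hV _ (hgS s hs a a.2 j)
    have h3 := hdrift s hs a a.2 j
    have h5 : c * w (g s (a : Fin n → ℝ) j) ≤ c * (κ * w s) := mul_le_mul_of_nonneg_left h3 hc
    calc |C s (a : Fin n → ℝ) j + γ * V (g s (a : Fin n → ℝ) j)|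
        ≤ |C s (a : Fin n → ℝ) j| + |γ * V (g s (a : Fin n → ℝ) j)| := abs_add_le _ _
      _ ≤ Cbar * w s + γ * (c * (κ * w s)) := by
          rw [abs_mul, abs_of_nonneg hγ0]
          have := mul_le_mul_of_nonneg_left (h2.trans h5) hγ0; linarith
      _ = (Cbar + γ * c * κ) * w s := by ring
  have hMx : (0:ℝ) ≤ (Cbar + γ * c * κ) * w s := mul_nonneg (by nlinarith [mul_nonneg (mul_nonneg hγ0 hc) hκ0]) hws
  unfold bel
  have bdd1 : BddBelow (Set.range fun a : A =>
      sE B1 (fun j => C s (a : Fin n → ℝ) j + γ * V (g s (a : Fin n → ℝ) j))) := by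
    refine ⟨-((Cbar + γ * c * κ) * w s), ?_⟩
    rintro v ⟨a, rfl⟩
    linarith [(abs_le.1 (abs_sE_le hB1 hB1s (hxb a))).1]
  have bdd2 : BddBelow (Set.range fun a : A =>
      sE B2 (fun j => C s (a : Fin n → ℝ) j + γ * V (g s (a : Fin n → ℝ) j))) := by
    refine ⟨-((Cbar + γ * c * κ) * w s), ?_⟩
    rintro v ⟨a, rfl⟩
    linarith [(abs_le.1 (abs_sE_le hB2 hB2s (hxb a))).1]
  refine abs_ciInf_sub_le bdd1 bdd2 fun a => ?_
  rw [abs_sub_le_iff]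
  constructor
  · have := sE_le_sE_add hB1 hB2 hB1s hB2s (hxb a) hMx hE12 hδ
    linarith
  · have := sE_le_sE_add hB2 hB1 hB2s hB1s (hxb a) hMx hE21 hδ
    linarith

include hS hA hγ0 hκ0 hCbar0 hw1 hCb hdrift hgS hγκ in
/-- Any `w`-bounded fixed point is bounded by `Cbar/(1-γκ) ⬝ w`. -/
lemma fixedpoint_bound {B : Set (Fin J → ℝ)} (hB : B.Nonempty) (hBs : B ⊆ stdSimplex ℝ (Fin J))
    {V : (Fin m → ℝ) → ℝ} (hVb : ∃ M, ∀ s ∈ S, |V s| ≤ M * w s)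
    (hfix : ∀ s ∈ S, V s = bel A C g γ B V s) :
    ∀ s ∈ S, |V s| ≤ Cbar / (1 - γ * κ) * w s := by
  obtain ⟨M, hM⟩ := hVb
  haveI : Nonempty S := hS.to_subtype
  set D : ℝ := ⨆ s : S, |V (s : Fin m → ℝ)| / w (s : Fin m → ℝ) with hD
  have hbdd : BddAbove (Set.range fun s : S => |V (s : Fin m → ℝ)| / w (s : Fin m → ℝ)) := by
    refine ⟨max M 0, ?_⟩
    rintro v ⟨s, rfl⟩
    have hw := hw1 s s.2
    have hwpos : (0:ℝ) < w s := lt_of_lt_of_le zero_lt_one hw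
    rw [div_le_iff₀ hwpos]
    calc |V (s : Fin m → ℝ)| ≤ M * w s := hM s s.2
      _ ≤ max M 0 * w s := mul_le_mul_of_nonneg_right (le_max_left _ _) (le_of_lt hwpos)
  have hDb : ∀ s ∈ S, |V s| ≤ D * w s := by
    intro s hs
    have hw := hw1 s hs
    have hwpos : (0:ℝ) < w s := lt_of_lt_of_le zero_lt_one hw
    have := le_ciSup hbdd (⟨s, hs⟩ : S)
    rw [div_le_iff₀ hwpos] at this
    exact this
  have hD0 : 0 ≤ D := by
    obtain ⟨s⟩ := ‹Nonempty S›
    have hwpos : (0:ℝ) < w s := lt_of_lt_of_le zero_lt_one (hw1 s s.2)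
    exact le_trans (div_nonneg (abs_nonneg _) (le_of_lt hwpos)) (le_ciSup hbdd s)
  have key : ∀ s ∈ S, |V s| ≤ (Cbar + γ * D * κ) * w s := by
    intro s hs
    rw [hfix s hs]
    exact bel_abs_bound hA hγ0 hκ0 hw1 hCb hdrift hgS hB hBs hD0 hDb s hs
  have hDle : D ≤ Cbar + γ * D * κ := by
    refine ciSup_le fun s => ?_
    have hwpos : (0:ℝ) < w s := lt_of_lt_of_le zero_lt_one (hw1 s s.2)
    rw [div_le_iff₀ hwpos]
    exact key s s.2
  have h1γκ : 0 < 1 - γ * κ := by linarith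
  have hDM0 : D ≤ Cbar / (1 - γ * κ) := by
    rw [le_div_iff₀ h1γκ]; nlinarith
  intro s hs
  have hwpos : (0:ℝ) < w s := lt_of_lt_of_le zero_lt_one (hw1 s hs)
  calc |V s| ≤ D * w s := hDb s hs
    _ ≤ Cbar / (1 - γ * κ) * w s := mul_le_mul_of_nonneg_right hDM0 (le_of_lt hwpos)

include hS hA hγ0 hκ0 hCbar0 hw1 hCb hdrift hgS hγκ in
/-- Fixed points for nearby ambiguity sets are close. -/
lemma fixedpoints_close {B1 B2 : Set (Fin J → ℝ)} (hB1 : B1.Nonempty) (hB2 : B2.Nonempty)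
    (hB1s : B1 ⊆ stdSimplex ℝ (Fin J)) (hB2s : B2 ⊆ stdSimplex ℝ (Fin J))
    {V1 V2 : (Fin m → ℝ) → ℝ}
    (hV1b : ∃ M, ∀ s ∈ S, |V1 s| ≤ M * w s) (hV2b : ∃ M, ∀ s ∈ S, |V2 s| ≤ M * w s)
    (hfix1 : ∀ s ∈ S, V1 s = bel A C g γ B1 V1 s)
    (hfix2 : ∀ s ∈ S, V2 s = bel A C g γ B2 V2 s)
    {δ : ℝ} (hδ : 0 ≤ δ)
    (hE12 : ∀ Q ∈ B1, ∃ Q' ∈ B2, dTV Q Q' ≤ δ)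
    (hE21 : ∀ Q ∈ B2, ∃ Q' ∈ B1, dTV Q Q' ≤ δ) :
    ∀ s ∈ S, |V1 s - V2 s| ≤
      δ * (Cbar + γ * (Cbar / (1 - γ * κ)) * κ) / (1 - γ * κ) * w s := by
  haveI : Nonempty S := hS.to_subtype
  set M0 : ℝ := Cbar / (1 - γ * κ) with hM0def
  have h1γκ : 0 < 1 - γ * κ := by linarith
  have hM00 : 0 ≤ M0 := div_nonneg (le_of_lt hCbar0) (le_of_lt h1γκ)
  have hV1M0 : ∀ s ∈ S, |V1 s| ≤ M0 * w s :=
    fixedpoint_bound hS hA hγ0 hκ0 hCbar0 hw1 hCb hdrift hgS hγκ hB1 hB1s hV1b hfix1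
  have hV2M0 : ∀ s ∈ S, |V2 s| ≤ M0 * w s :=
    fixedpoint_bound hS hA hγ0 hκ0 hCbar0 hw1 hCb hdrift hgS hγκ hB2 hB2s hV2b hfix2
  set D : ℝ := ⨆ s : S, |V1 (s : Fin m → ℝ) - V2 (s : Fin m → ℝ)| / w (s : Fin m → ℝ) with hD
  have hbdd : BddAbove (Set.range fun s : S =>
      |V1 (s : Fin m → ℝ) - V2 (s : Fin m → ℝ)| / w (s : Fin m → ℝ)) := by
    refine ⟨2 * M0, ?_⟩
    rintro v ⟨s, rfl⟩
    have hwpos : (0:ℝ) < w s := lt_of_lt_of_le zero_lt_one (hw1 s s.2)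
    rw [div_le_iff₀ hwpos]
    calc |V1 (s:Fin m → ℝ) - V2 (s:Fin m → ℝ)| ≤ |V1 (s:Fin m → ℝ)| + |V2 (s:Fin m → ℝ)| :=
          abs_sub _ _
      _ ≤ 2 * M0 * w s := by linarith [hV1M0 s s.2, hV2M0 s s.2]
  have hDb : ∀ s ∈ S, |V1 s - V2 s| ≤ D * w s := by
    intro s hs
    have hwpos : (0:ℝ) < w s := lt_of_lt_of_le zero_lt_one (hw1 s hs)
    have := le_ciSup hbdd (⟨s, hs⟩ : S)
    rwa [div_le_iff₀ hwpos] at this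
  have hD0 : 0 ≤ D := by
    obtain ⟨s⟩ := ‹Nonempty S›
    have hwpos : (0:ℝ) < w s := lt_of_lt_of_le zero_lt_one (hw1 s s.2)
    exact le_trans (div_nonneg (abs_nonneg _) (le_of_lt hwpos)) (le_ciSup hbdd s)
  set K1 : ℝ := Cbar + γ * M0 * κ with hK1def
  have hK10 : 0 ≤ K1 := by positivity
  have key : ∀ s ∈ S, |V1 s - V2 s| ≤ (γ * κ * D + δ * K1) * w s := by
    intro s hs
    have e1 : |bel A C g γ B1 V1 s - bel A C g γ B1 V2 s| ≤ γ * κ * D * w s :=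
      bel_contract hA hγ0 hκ0 hw1 hCb hdrift hgS hB1 hB1s hD0 hM00 hV1M0 hDb s hs
    have e2 : |bel A C g γ B1 V2 s - bel A C g γ B2 V2 s| ≤ δ * (K1 * w s) :=
      bel_set_change hA hγ0 hκ0 hCbar0 hw1 hCb hdrift hgS hB1 hB2 hB1s hB2s hM00 hδ hV2M0
        hE12 hE21 s hs
    rw [hfix1 s hs, hfix2 s hs]
    calc |bel A C g γ B1 V1 s - bel A C g γ B2 V2 s|
        ≤ |bel A C g γ B1 V1 s - bel A C g γ B1 V2 s| +
          |bel A C g γ B1 V2 s - bel A C g γ B2 V2 s| := abs_sub_le _ _ _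
      _ ≤ γ * κ * D * w s + δ * (K1 * w s) := by linarith
      _ = (γ * κ * D + δ * K1) * w s := by ring
  have hDle : D ≤ γ * κ * D + δ * K1 := by
    refine ciSup_le fun s => ?_
    have hwpos : (0:ℝ) < w s := lt_of_lt_of_le zero_lt_one (hw1 s s.2)
    rw [div_le_iff₀ hwpos]
    exact key s s.2
  have hDfin : D ≤ δ * K1 / (1 - γ * κ) := by
    rw [le_div_iff₀ h1γκ]; nlinarith
  intro s hs
  have hwpos : (0:ℝ) < w s := lt_of_lt_of_le zero_lt_one (hw1 s hs)
  calc |V1 s - V2 s| ≤ D * w s := hDb s hs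
    _ ≤ δ * K1 / (1 - γ * κ) * w s := mul_le_mul_of_nonneg_right hDfin (le_of_lt hwpos)

end Bellman2

lemma sE_cont {J : ℕ} {B : Set (Fin J → ℝ)} (hB : B.Nonempty) (hBs : B ⊆ stdSimplex ℝ (Fin J)) :
    Continuous (sE B) := by
  have : LipschitzWith 1 (sE B) := by
    refine LipschitzWith.of_dist_le_mul fun x y => ?_
    rw [Real.dist_eq, NNReal.coe_one, one_mul]
    refine abs_sE_sub_le hB hBs fun j => ?_
    rw [← Real.dist_eq]
    exact dist_le_pi_dist x y j
  exact this.continuous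

/-- Berge-type lemma: min over a compact set of a continuous function is continuous. -/
lemma berge_min_cont {m n : ℕ} {S : Set (Fin m → ℝ)} {A : Set (Fin n → ℝ)}
    (hScl : IsClosed S) (hA : A.Nonempty) (hAcp : IsCompact A)
    {h : (Fin m → ℝ) × (Fin n → ℝ) → ℝ} (hcont : ContinuousOn h (S ×ˢ A)) :
    ContinuousOn (fun s => ⨅ a : A, h (s, (a : Fin n → ℝ))) S := by
  haveI : Nonempty A := hA.to_subtype
  intro s₀ hs₀
  rw [Metric.continuousWithinAt_iff]
  intro ε hε
  set K := S ∩ Metric.closedBall s₀ 1 with hK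
  have hKcp : IsCompact K := (isCompact_closedBall s₀ 1).inter_left hScl
  have hKA : IsCompact (K ×ˢ A) := hKcp.prod hAcp
  have hsub : K ×ˢ A ⊆ S ×ˢ A := Set.prod_mono Set.inter_subset_left subset_rfl
  have hu : UniformContinuousOn h (K ×ˢ A) :=
    hKA.uniformContinuousOn_of_continuous (hcont.mono hsub)
  obtain ⟨δ', hδ'pos, hδ'⟩ := (Metric.uniformContinuousOn_iff).1 hu (ε/2) (by linarith)
  refine ⟨min δ' 1, by positivity, fun {s} hs hds => ?_⟩
  have hs₀K : s₀ ∈ K := ⟨hs₀, Metric.mem_closedBall_self (by norm_num)⟩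
  have hsK : s ∈ K := ⟨hs, Metric.mem_closedBall.2 (le_of_lt (lt_of_lt_of_le hds (min_le_right _ _)))⟩
  have hae : ∀ a : A, |h (s, (a : Fin n → ℝ)) - h (s₀, (a : Fin n → ℝ))| ≤ ε/2 := by
    intro a
    have hd : dist ((s, (a : Fin n → ℝ))) ((s₀, (a : Fin n → ℝ))) < δ' := by
      rw [Prod.dist_eq]
      simp only [dist_self]
      rw [max_eq_left dist_nonneg]
      exact lt_of_lt_of_le hds (min_le_left _ _)
    have := hδ' _ (Set.mk_mem_prod hsK a.2) _ (Set.mk_mem_prod hs₀K a.2) hd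
    rw [Real.dist_eq] at this
    linarith
  have bdd : ∀ t ∈ S, BddBelow (Set.range fun a : A => h (t, (a : Fin n → ℝ))) := by
    intro t ht
    have hct : ContinuousOn (fun a => h (t, a)) A := by
      refine ContinuousOn.comp hcont (Continuous.continuousOn ?_) fun a ha => ⟨ht, ha⟩
      exact Continuous.prodMk_right t
    have himg : IsCompact ((fun a => h (t, a)) '' A) := hAcp.image_of_continuousOn hct
    have := himg.bddBelow
    rwa [Set.image_eq_range] at this
  rw [Real.dist_eq]
  have := abs_ciInf_sub_le (bdd s hs) (bdd s₀ hs₀) hae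
  linarith

section Cont

variable {J m n : ℕ} {S : Set (Fin m → ℝ)} {A : Set (Fin n → ℝ)}
  {C : (Fin m → ℝ) → (Fin n → ℝ) → Fin J → ℝ}
  {g : (Fin m → ℝ) → (Fin n → ℝ) → Fin J → Fin m → ℝ}
  {γ κ Cbar : ℝ} {w : (Fin m → ℝ) → ℝ}

variable (hS : S.Nonempty) (hScl : IsClosed S) (hA : A.Nonempty) (hAcp : IsCompact A)
  (hCcont : ∀ j, ContinuousOn (fun p : (Fin m → ℝ) × (Fin n → ℝ) => C p.1 p.2 j) (S ×ˢ A))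
  (hgcont : ∀ j, ContinuousOn (fun p : (Fin m → ℝ) × (Fin n → ℝ) => g p.1 p.2 j) (S ×ˢ A))
  (hgS : ∀ s ∈ S, ∀ a ∈ A, ∀ j, g s a j ∈ S)
  (hγ0 : 0 ≤ γ) (hκ0 : 0 ≤ κ) (hCbar0 : 0 < Cbar)
  (hw1 : ∀ s ∈ S, 1 ≤ w s) (hwcont : ContinuousOn w S)
  (hCb : ∀ s ∈ S, ∀ a ∈ A, ∀ j, |C s a j| ≤ Cbar * w s)
  (hdrift : ∀ s ∈ S, ∀ a ∈ A, ∀ j, w (g s a j) ≤ κ * w s)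
  (hγκ : γ * κ < 1)

include hScl hA hAcp hCcont hgcont hgS in
lemma bel_cont {B : Set (Fin J → ℝ)} (hB : B.Nonempty) (hBs : B ⊆ stdSimplex ℝ (Fin J))
    {V : (Fin m → ℝ) → ℝ} (hVcont : ContinuousOn V S) :
    ContinuousOn (fun s => bel A C g γ B V s) S := by
  unfold bel
  have hx : ContinuousOn (fun p : (Fin m → ℝ) × (Fin n → ℝ) =>
      (fun j => C p.1 p.2 j + γ * V (g p.1 p.2 j))) (S ×ˢ A) := by
    refine continuousOn_pi.2 fun j => ?_
    refine (hCcont j).add (ContinuousOn.mul continuousOn_const ?_)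
    exact hVcont.comp (hgcont j) fun p hp => hgS _ hp.1 _ hp.2 j
  have hh : ContinuousOn (fun p : (Fin m → ℝ) × (Fin n → ℝ) =>
      sE B (fun j => C p.1 p.2 j + γ * V (g p.1 p.2 j))) (S ×ˢ A) :=
    (sE_cont hB hBs).comp_continuousOn hx
  have := berge_min_cont hScl hA hAcp hh
  simpa using this

/-- Bellman iterates. -/
noncomputable def belIter {J m n : ℕ} (A : Set (Fin n → ℝ))
    (C : (Fin m → ℝ) → (Fin n → ℝ) → Fin J → ℝ)
    (g : (Fin m → ℝ) → (Fin n → ℝ) → Fin J → Fin m → ℝ) (γ : ℝ)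
    (B : Set (Fin J → ℝ)) : ℕ → (Fin m → ℝ) → ℝ
  | 0 => fun _ => 0
  | (k+1) => fun s => bel A C g γ B (belIter A C g γ B k) s

include hS hScl hA hAcp hCcont hgcont hgS hγ0 hκ0 hCbar0 hw1 hwcont hCb hdrift hγκ in
/-- The `w`-bounded fixed point of the robust Bellman operator is continuous on `S`. -/
lemma fixedpoint_cont {B : Set (Fin J → ℝ)} (hB : B.Nonempty) (hBs : B ⊆ stdSimplex ℝ (Fin J))
    {V : (Fin m → ℝ) → ℝ} (hVb : ∃ M, ∀ s ∈ S, |V s| ≤ M * w s)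
    (hfix : ∀ s ∈ S, V s = bel A C g γ B V s) :
    ContinuousOn V S := by
  set M0 : ℝ := Cbar / (1 - γ * κ) with hM0def
  have h1γκ : 0 < 1 - γ * κ := by linarith
  have hM00 : 0 ≤ M0 := div_nonneg (le_of_lt hCbar0) (le_of_lt h1γκ)
  have hγκ0 : 0 ≤ γ * κ := mul_nonneg hγ0 hκ0
  have hVM0 : ∀ s ∈ S, |V s| ≤ M0 * w s :=
    fixedpoint_bound hS hA hγ0 hκ0 hCbar0 hw1 hCb hdrift hgS hγκ hB hBs hVb hfix
  -- iterate properties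
  have hItcont : ∀ k, ContinuousOn (belIter A C g γ B k) S := by
    intro k
    induction k with
    | zero => exact continuousOn_const
    | succ k ih => exact bel_cont hScl hA hAcp hCcont hgcont hgS hB hBs ih
  have hItclose : ∀ k, ∀ s ∈ S, |belIter A C g γ B k s - V s| ≤ (γ * κ)^k * M0 * w s := by
    intro k
    induction k with
    | zero =>
      intro s hs
      simpa [belIter] using (by simpa using hVM0 s hs : |V s| ≤ M0 * w s).trans_eq (by ring)
    | succ k ih =>
      have hItb : ∀ s ∈ S, |belIter A C g γ B k s| ≤ ((γ * κ)^k * M0 + M0) * w s := by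
        intro s hs
        have h1 := ih s hs
        have h2 := hVM0 s hs
        have : |belIter A C g γ B k s| ≤ |belIter A C g γ B k s - V s| + |V s| := by
          calc |belIter A C g γ B k s| = |(belIter A C g γ B k s - V s) + V s| := by congr 1; ring
            _ ≤ |belIter A C g γ B k s - V s| + |V s| := abs_add_le _ _
        linarith [this.trans (by linarith : |belIter A C g γ B k s - V s| + |V s| ≤
          ((γ * κ)^k * M0 + M0) * w s)]
      intro s hs
      have hc0 : 0 ≤ (γ * κ)^k * M0 := mul_nonneg (pow_nonneg hγκ0 k) hM00
      have := bel_contract hA hγ0 hκ0 hw1 hCb hdrift hgS hB hBs hc0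
        (by positivity : (0:ℝ) ≤ (γ * κ)^k * M0 + M0) hItb ih s hs
      have heq : belIter A C g γ B (k+1) s - V s =
          bel A C g γ B (belIter A C g γ B k) s - bel A C g γ B V s := by
        rw [hfix s hs]; rfl
      rw [heq]
      calc |bel A C g γ B (belIter A C g γ B k) s - bel A C g γ B V s|
          ≤ γ * κ * ((γ * κ)^k * M0) * w s := this
        _ = (γ * κ)^(k+1) * M0 * w s := by ring
  -- continuity of V
  intro s₀ hs₀
  rw [Metric.continuousWithinAt_iff]
  intro ε hε
  set K := S ∩ Metric.closedBall s₀ 1 with hKdef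
  have hKcp : IsCompact K := (isCompact_closedBall s₀ 1).inter_left hScl
  obtain ⟨W, hW⟩ := (hKcp.image_of_continuousOn (hwcont.mono Set.inter_subset_left)).bddAbove
  have hWb : ∀ t ∈ K, w t ≤ W := fun t ht => hW (Set.mem_image_of_mem w ht)
  have hs₀K : s₀ ∈ K := ⟨hs₀, Metric.mem_closedBall_self (by norm_num)⟩
  have hW1 : (1:ℝ) ≤ W := le_trans (hw1 s₀ hs₀) (hWb s₀ hs₀K)
  have hMW : (0:ℝ) < M0 * W + 1 := by nlinarith
  obtain ⟨k, hk⟩ := ((tendsto_pow_atTop_nhds_zero_of_lt_one hγκ0 hγκ).eventually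
    (gt_mem_nhds (show (0:ℝ) < ε/(4*(M0*W+1)) by positivity))).exists
  obtain ⟨δ₁, hδ₁pos, hδ₁⟩ := Metric.continuousWithinAt_iff.1 (hItcont k s₀ hs₀) (ε/4)
    (by linarith)
  refine ⟨min δ₁ 1, by positivity, fun {s} hs hds => ?_⟩
  have hsK : s ∈ K := ⟨hs, Metric.mem_closedBall.2
    (le_of_lt (lt_of_lt_of_le hds (min_le_right _ _)))⟩
  have hterm : ∀ t ∈ K, |belIter A C g γ B k t - V t| ≤ ε/4 := by
    intro t ht
    have h1 := hItclose k t ht.1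
    have h2 : w t ≤ W := hWb t ht
    have h3 : (0:ℝ) ≤ (γ * κ)^k := pow_nonneg hγκ0 k
    have h4 : (γ * κ)^k * M0 * w t ≤ (γ * κ)^k * (M0 * W + 1) := by
      have ha : M0 * w t ≤ M0 * W + 1 := by nlinarith
      calc (γ * κ)^k * M0 * w t = (γ * κ)^k * (M0 * w t) := by ring
        _ ≤ (γ * κ)^k * (M0 * W + 1) := mul_le_mul_of_nonneg_left ha h3
    have h5 : (γ * κ)^k * (M0 * W + 1) ≤ ε/(4*(M0*W+1)) * (M0 * W + 1) :=
      mul_le_mul_of_nonneg_right (le_of_lt hk) (le_of_lt hMW)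
    have h6 : ε/(4*(M0*W+1)) * (M0 * W + 1) = ε/4 := by field_simp
    linarith
  have hmid : dist (belIter A C g γ B k s) (belIter A C g γ B k s₀) < ε/4 :=
    hδ₁ hs (lt_of_lt_of_le hds (min_le_left _ _))
  rw [Real.dist_eq] at hmid ⊢
  have t1 := hterm s hsK
  have t2 := hterm s₀ hs₀K
  rw [abs_sub_comm] at t1
  have tri : |V s - V s₀| ≤ |V s - belIter A C g γ B k s| +
      |belIter A C g γ B k s - belIter A C g γ B k s₀| +
      |belIter A C g γ B k s₀ - V s₀| := by
    have h1 := abs_sub_le (V s) (belIter A C g γ B k s) (V s₀)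
    have h2 := abs_sub_le (belIter A C g γ B k s) (belIter A C g γ B k s₀) (V s₀)
    linarith
  linarith

end Cont

lemma eDist_nonneg {d : ℕ} (x y : Fin d → ℝ) : 0 ≤ eDist x y := Real.sqrt_nonneg _

lemma eDist_le_sqrt_dist {d : ℕ} (x y : Fin d → ℝ) :
    eDist x y ≤ Real.sqrt d * dist x y := by
  have h1 : ∑ i, (x i - y i) ^ 2 ≤ (d : ℝ) * (dist x y)^2 := by
    calc ∑ i, (x i - y i) ^ 2 ≤ ∑ _i : Fin d, (dist x y)^2 := by
          refine Finset.sum_le_sum fun i _ => ?_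
          have hd := dist_le_pi_dist x y i
          rw [Real.dist_eq] at hd
          calc (x i - y i)^2 = |x i - y i|^2 := (sq_abs _).symm
            _ ≤ (dist x y)^2 := by nlinarith [abs_nonneg (x i - y i)]
      _ = (d : ℝ) * (dist x y)^2 := by simp [Finset.sum_const, mul_comm]
  calc eDist x y ≤ Real.sqrt ((d : ℝ) * (dist x y)^2) := Real.sqrt_le_sqrt h1
    _ = Real.sqrt d * dist x y := by
        rw [Real.sqrt_mul (Nat.cast_nonneg d), Real.sqrt_sq dist_nonneg]

lemma dTV_le_two {J : ℕ} {P Q : Fin J → ℝ} (hP : P ∈ stdSimplex ℝ (Fin J))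
    (hQ : Q ∈ stdSimplex ℝ (Fin J)) : dTV P Q ≤ 2 := by
  calc dTV P Q = ∑ j, |P j - Q j| := rfl
    _ ≤ ∑ j, (P j + Q j) := by
        refine Finset.sum_le_sum fun j _ => ?_
        calc |P j - Q j| ≤ |P j| + |Q j| := abs_sub _ _
          _ = P j + Q j := by rw [abs_of_nonneg (hP.1 j), abs_of_nonneg (hQ.1 j)]
    _ = 2 := by rw [Finset.sum_add_distrib, hP.2, hQ.2]; norm_num

lemma haus_near {J : ℕ} {B1 B2 : Set (Fin J → ℝ)} (hB1s : B1 ⊆ stdSimplex ℝ (Fin J))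
    (hB2s : B2 ⊆ stdSimplex ℝ (Fin J)) (hB2 : B2.Nonempty) {δ : ℝ}
    (h : excessD dTV B1 B2 < δ) : ∀ Q ∈ B1, ∃ Q' ∈ B2, dTV Q Q' ≤ δ := by
  intro Q hQ
  haveI : Nonempty B2 := hB2.to_subtype
  have hbdd : BddAbove (Set.range fun Q : B1 => ⨅ Q' : B2, dTV (Q : Fin J → ℝ) Q') := by
    refine ⟨2, ?_⟩
    rintro v ⟨P, rfl⟩
    obtain ⟨Q₀⟩ := ‹Nonempty B2›
    have hb : BddBelow (Set.range fun Q' : B2 => dTV (P : Fin J → ℝ) Q') := by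
      refine ⟨0, ?_⟩; rintro v ⟨Q', rfl⟩
      exact Finset.sum_nonneg fun j _ => abs_nonneg _
    exact (ciInf_le hb Q₀).trans (dTV_le_two (hB1s P.2) (hB2s Q₀.2))
  have h1 : (⨅ Q' : B2, dTV Q (Q' : Fin J → ℝ)) < δ :=
    lt_of_le_of_lt (le_ciSup hbdd (⟨Q, hQ⟩ : B1)) h
  obtain ⟨Q', hQ'⟩ := exists_lt_of_ciInf_lt h1
  exact ⟨Q', Q'.2, le_of_lt hQ'⟩

/-- Stability of the argmin set of a continuous function on a compact set. -/
lemma argmin_stable {n : ℕ} {A : Set (Fin n → ℝ)} (hAcp : IsCompact A)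
    {f : (Fin n → ℝ) → ℝ} (hf : ContinuousOn f A) {a₀ : Fin n → ℝ} (ha₀ : a₀ ∈ A)
    (hmin : ∀ a ∈ A, f a₀ ≤ f a) :
    ∀ ε > (0:ℝ), ∃ β > (0:ℝ), ∀ a ∈ A, f a ≤ f a₀ + β →
      ∃ b, (b ∈ A ∧ ∀ a' ∈ A, f b ≤ f a') ∧ eDist a b < ε := by
  intro ε hε
  by_contra hcon
  push_neg at hcon
  have hstep : ∀ k : ℕ, ∃ a ∈ A, f a ≤ f a₀ + 1/(k+1) ∧
      ∀ b, (b ∈ A ∧ ∀ a' ∈ A, f b ≤ f a') → ε ≤ eDist a b := by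
    intro k
    obtain ⟨a, haA, hfa, hfar⟩ := hcon (1/(k+1)) (by positivity)
    exact ⟨a, haA, hfa, fun b hb => hfar b hb⟩
  choose u huA hub hufar using hstep
  obtain ⟨astar, hastarA, φ, hφ, hconv⟩ := hAcp.tendsto_subseq huA
  have htend : Tendsto (fun k => u (φ k)) atTop (𝓝[A] astar) := by
    rw [tendsto_nhdsWithin_iff]
    exact ⟨hconv, Filter.Eventually.of_forall fun k => huA (φ k)⟩
  have hfc : Tendsto (fun k => f (u (φ k))) atTop (𝓝 (f astar)) :=
    (hf astar hastarA).tendsto.comp htend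
  have hbd : Tendsto (fun k => f a₀ + 1/((φ k : ℝ)+1)) atTop (𝓝 (f a₀)) := by
    have h0 : Tendsto (fun k : ℕ => 1/((k : ℝ)+1)) atTop (𝓝 0) :=
      tendsto_one_div_add_atTop_nhds_zero_nat
    have h1 : Tendsto (fun k => 1/((φ k : ℝ)+1)) atTop (𝓝 0) :=
      h0.comp hφ.tendsto_atTop
    simpa using tendsto_const_nhds.add h1
  have hfa : f astar ≤ f a₀ :=
    le_of_tendsto_of_tendsto' hfc hbd fun k => hub (φ k)
  have hamin : astar ∈ A ∧ ∀ a' ∈ A, f astar ≤ f a' :=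
    ⟨hastarA, fun a' ha' => le_trans hfa (hmin a' ha')⟩
  have hεle : ∀ k, ε ≤ eDist (u (φ k)) astar := fun k => hufar (φ k) astar hamin
  -- but eDist (u (φ k)) astar → 0
  have hsq : (0:ℝ) ≤ Real.sqrt n := Real.sqrt_nonneg _
  obtain ⟨k, hk0⟩ := Metric.tendsto_atTop.1 hconv (ε/(Real.sqrt n + 1)) (by positivity)
  have hk := hk0 k le_rfl
  have : eDist (u (φ k)) astar < ε := by
    calc eDist (u (φ k)) astar ≤ Real.sqrt n * dist (u (φ k)) astar :=
          eDist_le_sqrt_dist _ _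
      _ ≤ Real.sqrt n * (ε/(Real.sqrt n + 1)) :=
          mul_le_mul_of_nonneg_left (le_of_lt hk) hsq
      _ < ε := by
          rw [div_eq_inv_mul]
          have h2 : Real.sqrt n * ((Real.sqrt n + 1)⁻¹ * ε) =
              (Real.sqrt n / (Real.sqrt n + 1)) * ε := by ring
          rw [h2]
          have h3 : Real.sqrt n / (Real.sqrt n + 1) < 1 := by
            rw [div_lt_one (by linarith)]; linarith
          nlinarith
  exact absurd (hεle k) (not_le.2 this)

lemma final_step {n : ℕ} {A : Set (Fin n → ℝ)} {fh ft : (Fin n → ℝ) → ℝ} {a₀ : Fin n → ℝ}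
    (ha₀A : a₀ ∈ A) {β η ε : ℝ} (hε : 0 < ε)
    (hstab : ∀ a ∈ A, fh a ≤ fh a₀ + β →
      ∃ b, (b ∈ A ∧ ∀ a' ∈ A, fh b ≤ fh a') ∧ eDist a b < ε/2)
    (hdiff : ∀ a ∈ A, |fh a - ft a| ≤ η) (h2η : 2*η ≤ β) :
    excessD (fun a b => eDist a b) {a ∈ A | ∀ a' ∈ A, ft a ≤ ft a'}
      {a ∈ A | ∀ a' ∈ A, fh a ≤ fh a'} < ε := by
  have hle : excessD (fun a b => eDist a b) {a ∈ A | ∀ a' ∈ A, ft a ≤ ft a'}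
      {a ∈ A | ∀ a' ∈ A, fh a ≤ fh a'} ≤ ε/2 := by
    rw [excessD]
    refine Real.iSup_le (fun x => ?_) (by linarith)
    obtain ⟨hxA, hxmin⟩ := x.2
    have h1 : fh (x : Fin n → ℝ) ≤ fh a₀ + β := by
      have d1 := (abs_le.1 (hdiff _ hxA)).2
      have d2 := (abs_le.1 (hdiff a₀ ha₀A)).1
      have d3 := hxmin a₀ ha₀A
      linarith
    obtain ⟨b, hb, hbd⟩ := hstab _ hxA h1
    have h2 : (⨅ y : {a ∈ A | ∀ a' ∈ A, fh a ≤ fh a'},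
        eDist (x : Fin n → ℝ) (y : Fin n → ℝ)) ≤ eDist (x : Fin n → ℝ) b := by
      refine ciInf_le ⟨0, ?_⟩ (⟨b, hb⟩ : {a ∈ A | ∀ a' ∈ A, fh a ≤ fh a'})
      rintro v ⟨y, rfl⟩
      exact eDist_nonneg _ _
    exact le_trans h2 (by linarith)
  linarith

lemma robustBellman_eq_bel {J m n : ℕ} (A : Set (Fin n → ℝ)) (B : Set (Fin J → ℝ))
    (C : (Fin m → ℝ) → (Fin n → ℝ) → Fin J → ℝ)
    (g : (Fin m → ℝ) → (Fin n → ℝ) → Fin J → Fin m → ℝ)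
    (γ : ℝ) (V : (Fin m → ℝ) → ℝ) (s : Fin m → ℝ) :
    robustBellman A B C g γ V s = bel A C g γ B V s := rfl


/-- qualitative stability of the robust optimal action set at a fixed
state `sbar` under perturbations of the ambiguity set measured in total variation
Hausdorff distance. -/
theorem robust_policy_stability_qualitative
    (J m n : ℕ) (hJ : 2 ≤ J)
    (S : Set (Fin m → ℝ)) (hS : S.Nonempty) (hScl : IsClosed S)
    (A : Set (Fin n → ℝ)) (hA : A.Nonempty) (hAcp : IsCompact A)
    (C : (Fin m → ℝ) → (Fin n → ℝ) → Fin J → ℝ)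
    (g : (Fin m → ℝ) → (Fin n → ℝ) → Fin J → Fin m → ℝ)
    (hCcont : ∀ j, ContinuousOn (fun p : (Fin m → ℝ) × (Fin n → ℝ) => C p.1 p.2 j) (S ×ˢ A))
    (hgcont : ∀ j, ContinuousOn (fun p : (Fin m → ℝ) × (Fin n → ℝ) => g p.1 p.2 j) (S ×ˢ A))
    (hgS : ∀ s ∈ S, ∀ a ∈ A, ∀ j, g s a j ∈ S)
    (γ : ℝ) (hγ0 : 0 ≤ γ) (hγ1 : γ < 1)
    (w : (Fin m → ℝ) → ℝ) (hw1 : ∀ s ∈ S, 1 ≤ w s) (hwcont : ContinuousOn w S)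
    (Cbar κ : ℝ) (hCbar0 : 0 < Cbar) (hκ0 : 0 ≤ κ)
    (hCb : ∀ s ∈ S, ∀ a ∈ A, ∀ j, |C s a j| ≤ Cbar * w s)
    (hdrift : ∀ s ∈ S, ∀ a ∈ A, ∀ j, w (g s a j) ≤ κ * w s)
    (hγκ : γ * κ < 1)
    (Phat rhat : Fin J → ℝ) (hPhat : Phat ∈ stdSimplex ℝ (Fin J)) (hrhat : ∀ j, 0 ≤ rhat j)
    (hboxne : (boxSet J Phat rhat).Nonempty)
    (Vhat : (Fin m → ℝ) → ℝ) (hVhatBd : ∃ M, ∀ s ∈ S, |Vhat s| ≤ M * w s)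
    (hVhatFix : ∀ s ∈ S, Vhat s = robustBellman A (boxSet J Phat rhat) C g γ Vhat s)
    (sbar : Fin m → ℝ) (hsbar : sbar ∈ S) :
    ∀ ε > (0 : ℝ), ∃ δ > (0 : ℝ),
      ∀ Ptil rtil : Fin J → ℝ, Ptil ∈ stdSimplex ℝ (Fin J) → (∀ j, 0 ≤ rtil j) →
        (boxSet J Ptil rtil).Nonempty →
        ∀ Vtil : (Fin m → ℝ) → ℝ, (∃ M, ∀ s ∈ S, |Vtil s| ≤ M * w s) →
          (∀ s ∈ S, Vtil s = robustBellman A (boxSet J Ptil rtil) C g γ Vtil s) →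
          hausD dTV (boxSet J Phat rhat) (boxSet J Ptil rtil) < δ →
          excessD (fun a b => eDist a b)
              ({a ∈ A | ∀ a' ∈ A,
                  (⨆ Q : boxSet J Ptil rtil, expec (Q : Fin J → ℝ)
                      (fun j => C sbar a j + γ * Vtil (g sbar a j))) ≤
                  (⨆ Q : boxSet J Ptil rtil, expec (Q : Fin J → ℝ)
                      (fun j => C sbar a' j + γ * Vtil (g sbar a' j)))} : Set (Fin n → ℝ))
              ({a ∈ A | ∀ a' ∈ A,
                  (⨆ Q : boxSet J Phat rhat, expec (Q : Fin J → ℝ)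
                      (fun j => C sbar a j + γ * Vhat (g sbar a j))) ≤
                  (⨆ Q : boxSet J Phat rhat, expec (Q : Fin J → ℝ)
                      (fun j => C sbar a' j + γ * Vhat (g sbar a' j)))} : Set (Fin n → ℝ))
            < ε := by
  intro ε hε
  have hBhats : boxSet J Phat rhat ⊆ stdSimplex ℝ (Fin J) := fun Q hQ => hQ.1
  have h1γκ : 0 < 1 - γ * κ := by linarith
  have hM00 : 0 ≤ Cbar / (1 - γ * κ) := div_nonneg hCbar0.le h1γκ.le
  have hK10 : 0 < Cbar + γ * (Cbar / (1 - γ * κ)) * κ := by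
    nlinarith [mul_nonneg (mul_nonneg hγ0 hM00) hκ0]
  have hwsbar : (1:ℝ) ≤ w sbar := hw1 sbar hsbar
  set K1 : ℝ := Cbar + γ * (Cbar / (1 - γ * κ)) * κ with hK1def
  set L : ℝ := K1 * w sbar + γ * (K1/(1 - γ*κ)) * κ * w sbar with hLdef
  have hL0 : 0 ≤ L := by
    have h2 : (0:ℝ) ≤ γ * (K1/(1 - γ*κ)) * κ * w sbar := by
      have h2a := div_nonneg hK10.le h1γκ.le
      have hws : (0:ℝ) ≤ w sbar := by linarith
      positivity
    have h3 : (0:ℝ) ≤ K1 * w sbar := mul_nonneg hK10.le (by linarith)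
    rw [hLdef]
    linarith
  -- hat fixed point data
  have hVhatFix' : ∀ s ∈ S, Vhat s = bel A C g γ (boxSet J Phat rhat) Vhat s := by
    intro s hs; rw [hVhatFix s hs, robustBellman_eq_bel]
  have hVhatM0 : ∀ s ∈ S, |Vhat s| ≤ Cbar / (1 - γ * κ) * w s :=
    fixedpoint_bound hS hA hγ0 hκ0 hCbar0 hw1 hCb hdrift hgS hγκ hboxne hBhats hVhatBd hVhatFix'
  have hVhatcont : ContinuousOn Vhat S :=
    fixedpoint_cont hS hScl hA hAcp hCcont hgcont hgS hγ0 hκ0 hCbar0 hw1 hwcont hCb hdrift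
      hγκ hboxne hBhats hVhatBd hVhatFix'
  -- hat objective
  set fh : (Fin n → ℝ) → ℝ := fun a => ⨆ Q : boxSet J Phat rhat, expec (Q : Fin J → ℝ)
    (fun j => C sbar a j + γ * Vhat (g sbar a j)) with hfhdef
  have hmap : Set.MapsTo (fun a => (sbar, a)) A (S ×ˢ A) := fun a ha => ⟨hsbar, ha⟩
  have hxc : ContinuousOn (fun a => (fun j => C sbar a j + γ * Vhat (g sbar a j))) A := by
    refine continuousOn_pi.2 fun j => ?_
    refine ContinuousOn.add ?_ (ContinuousOn.mul continuousOn_const ?_)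
    · exact (hCcont j).comp (Continuous.prodMk_right sbar).continuousOn hmap
    · refine hVhatcont.comp ?_ fun a ha => hgS sbar hsbar a ha j
      exact (hgcont j).comp (Continuous.prodMk_right sbar).continuousOn hmap
  have hfhcont : ContinuousOn fh A := (sE_cont hboxne hBhats).comp_continuousOn hxc
  obtain ⟨a₀, ha₀A, ha₀min'⟩ := hAcp.exists_isMinOn hA hfhcont
  have ha₀min : ∀ a ∈ A, fh a₀ ≤ fh a := fun a ha => ha₀min' ha
  obtain ⟨β, hβ0, hβ⟩ := argmin_stable hAcp hfhcont ha₀A ha₀min (ε/2) (by linarith)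
  refine ⟨β/(2*(L+1)), by positivity, ?_⟩
  intro Ptil rtil hPtil hrtil hboxtilne Vtil hVtilBd hVtilFix hhaus
  set δv : ℝ := β/(2*(L+1)) with hδvdef
  have hδv0 : 0 < δv := by positivity
  have hBtils : boxSet J Ptil rtil ⊆ stdSimplex ℝ (Fin J) := fun Q hQ => hQ.1
  rw [hausD] at hhaus
  have hE12 : ∀ Q ∈ boxSet J Phat rhat, ∃ Q' ∈ boxSet J Ptil rtil, dTV Q Q' ≤ δv :=
    haus_near hBhats hBtils hboxtilne (lt_of_le_of_lt (le_max_left _ _) hhaus)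
  have hE21 : ∀ Q ∈ boxSet J Ptil rtil, ∃ Q' ∈ boxSet J Phat rhat, dTV Q Q' ≤ δv :=
    haus_near hBtils hBhats hboxne (lt_of_le_of_lt (le_max_right _ _) hhaus)
  have hVtilFix' : ∀ s ∈ S, Vtil s = bel A C g γ (boxSet J Ptil rtil) Vtil s := by
    intro s hs; rw [hVtilFix s hs, robustBellman_eq_bel]
  have hclose : ∀ s ∈ S, |Vhat s - Vtil s| ≤ δv * K1 / (1 - γ * κ) * w s :=
    fixedpoints_close hS hA hγ0 hκ0 hCbar0 hw1 hCb hdrift hgS hγκ hboxne hboxtilne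
      hBhats hBtils hVhatBd hVtilBd hVhatFix' hVtilFix' hδv0.le hE12 hE21
  set ft : (Fin n → ℝ) → ℝ := fun a => ⨆ Q : boxSet J Ptil rtil, expec (Q : Fin J → ℝ)
    (fun j => C sbar a j + γ * Vtil (g sbar a j)) with hftdef
  -- uniform objective difference
  have hdiff : ∀ a ∈ A, |fh a - ft a| ≤ δv * L := by
    intro a ha
    have hxb : ∀ j, |C sbar a j + γ * Vhat (g sbar a j)| ≤ K1 * w sbar := by
      intro j
      have h1 := hCb sbar hsbar a ha j
      have h2 : |Vhat (g sbar a j)| ≤ Cbar / (1 - γ * κ) * w (g sbar a j) :=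
        hVhatM0 _ (hgS sbar hsbar a ha j)
      have h3 := hdrift sbar hsbar a ha j
      have h5 : Cbar / (1 - γ * κ) * w (g sbar a j) ≤ Cbar / (1 - γ * κ) * (κ * w sbar) :=
        mul_le_mul_of_nonneg_left h3 hM00
      calc |C sbar a j + γ * Vhat (g sbar a j)|
          ≤ |C sbar a j| + |γ * Vhat (g sbar a j)| := abs_add_le _ _
        _ ≤ Cbar * w sbar + γ * (Cbar / (1 - γ * κ) * (κ * w sbar)) := by
            rw [abs_mul, abs_of_nonneg hγ0]
            have := mul_le_mul_of_nonneg_left (h2.trans h5) hγ0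
            linarith
        _ = K1 * w sbar := by rw [hK1def]; ring
    have hMx0 : (0:ℝ) ≤ K1 * w sbar := mul_nonneg hK10.le (by linarith)
    have t1 : |sE (boxSet J Phat rhat) (fun j => C sbar a j + γ * Vhat (g sbar a j)) -
        sE (boxSet J Ptil rtil) (fun j => C sbar a j + γ * Vhat (g sbar a j))| ≤
        δv * (K1 * w sbar) := by
      have h12 := sE_le_sE_add hboxne hboxtilne hBhats hBtils hxb hMx0 hE12 hδv0.le
      have h21 := sE_le_sE_add hboxtilne hboxne hBtils hBhats hxb hMx0 hE21 hδv0.le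
      rw [abs_sub_le_iff]
      exact ⟨by linarith, by linarith⟩
    have t2 : |sE (boxSet J Ptil rtil) (fun j => C sbar a j + γ * Vhat (g sbar a j)) -
        sE (boxSet J Ptil rtil) (fun j => C sbar a j + γ * Vtil (g sbar a j))| ≤
        γ * (δv * K1 / (1 - γ * κ)) * (κ * w sbar) := by
      refine abs_sE_sub_le hboxtilne hBtils fun j => ?_
      have heq : C sbar a j + γ * Vhat (g sbar a j) - (C sbar a j + γ * Vtil (g sbar a j)) =
          γ * (Vhat (g sbar a j) - Vtil (g sbar a j)) := by ring
      rw [heq, abs_mul, abs_of_nonneg hγ0]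
      have h2 : |Vhat (g sbar a j) - Vtil (g sbar a j)| ≤
          δv * K1 / (1 - γ * κ) * w (g sbar a j) := hclose _ (hgS sbar hsbar a ha j)
      have h3 := hdrift sbar hsbar a ha j
      have hc0 : (0:ℝ) ≤ δv * K1 / (1 - γ * κ) :=
        div_nonneg (mul_nonneg hδv0.le hK10.le) h1γκ.le
      have h5 : δv * K1 / (1 - γ * κ) * w (g sbar a j) ≤
          δv * K1 / (1 - γ * κ) * (κ * w sbar) := mul_le_mul_of_nonneg_left h3 hc0
      have := mul_le_mul_of_nonneg_left (h2.trans h5) hγ0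
      linarith
    have hfh : fh a = sE (boxSet J Phat rhat) (fun j => C sbar a j + γ * Vhat (g sbar a j)) := rfl
    have hft : ft a = sE (boxSet J Ptil rtil) (fun j => C sbar a j + γ * Vtil (g sbar a j)) := rfl
    rw [hfh, hft]
    have tri := abs_sub_le
      (sE (boxSet J Phat rhat) (fun j => C sbar a j + γ * Vhat (g sbar a j)))
      (sE (boxSet J Ptil rtil) (fun j => C sbar a j + γ * Vhat (g sbar a j)))
      (sE (boxSet J Ptil rtil) (fun j => C sbar a j + γ * Vtil (g sbar a j)))
    have hLsum : δv * (K1 * w sbar) + γ * (δv * K1 / (1 - γ * κ)) * (κ * w sbar) = δv * L := by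
      rw [hLdef]; field_simp
    exact le_trans tri (le_of_le_of_eq (add_le_add t1 t2) hLsum)
  have h2η : 2 * (δv * L) ≤ β := by
    have hb : δv * (2*(L+1)) = β := by
      rw [hδvdef]; field_simp
    nlinarith [hδv0.le]
  exact final_step ha₀A hε hβ hdiff h2η

end
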